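/- Let α and β be coprime positive integers, and let x and y be real numbers such that x ∉ ℤ or y ∉ ℤ. Then s(β, α; x, y) + s(α, β; y, x) = ((x))·((y)) + ( β²·ψ₂(y) + ψ₂(βy + αx) + α²·ψ₂(x) ) / (2αβ), where ψ₂(t) = B₂({t}) and B₂(z) = z² − z + 1/6 is the second Bernoulli polynomial. (Dedekind–Rademacher reciprocity law, non-integer case.) -/

import Mathlib

/-- The sawtooth function `((x))`: equal to `{x} - 1/2` for `x ∉ ℤ` and to `0` for `x ∈ ℤ`. -/
noncomputable def sawtooth (x : ℝ) : ℝ :=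
  if Int.fract x = 0 then 0 else Int.fract x - 1 / 2

/-- The Dedekind–Rademacher sum `s(β, α; x, y) = ∑_{r=1}^α ((x + β(r+y)/α)) (((r+y)/α))`. -/
noncomputable def drSum (b : ℤ) (a : ℕ) (x y : ℝ) : ℝ :=
  ∑ r ∈ Finset.Icc 1 a,
    sawtooth (x + (b : ℝ) * (((r : ℝ) + y) / (a : ℝ))) * sawtooth (((r : ℝ) + y) / (a : ℝ))

/-- `ψ₂(t) = B₂({t})` where `B₂(z) = z² - z + 1/6` is the second Bernoulli polynomial. -/
noncomputable def psi2 (t : ℝ) : ℝ :=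
  Int.fract t ^ 2 - Int.fract t + 1 / 6

lemma sawtooth_add_int (x : ℝ) (n : ℤ) : sawtooth (x + n) = sawtooth x := by
  simp [sawtooth, Int.fract_add_intCast]

lemma psi2_add_int (t : ℝ) (n : ℤ) : psi2 (t + n) = psi2 t := by
  simp [psi2, Int.fract_add_intCast]

lemma shift_sum {f : ℕ → ℝ} (a : ℕ) (hf : f a = f 0) :
    ∑ r ∈ Finset.range a, f (r + 1) = ∑ r ∈ Finset.range a, f r := by
  have h1 := Finset.sum_range_succ' f a
  have h2 := Finset.sum_range_succ f a
  rw [h2] at h1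
  linarith

lemma periodic_int {H : ℝ → ℝ} (h : ∀ t, H (t + 1) = H t) (t : ℝ) (n : ℤ) :
    H (t + n) = H t := by
  induction n using Int.induction_on with
  | zero => simp
  | succ k ih =>
      push_cast
      push_cast at ih
      rw [show t + ((k : ℝ) + 1) = t + k + 1 by ring, h, ih]
  | pred k ih =>
      push_cast
      push_cast at ih
      rw [show t + (-(k : ℝ) - 1) = t + (-(k:ℝ) - 1) by ring, ← ih,
        show t + -(k:ℝ) = t + (-(k:ℝ) - 1) + 1 by ring, h]

lemma sum_quad (c d e : ℝ) (n : ℕ) :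
    ∑ r ∈ Finset.range n, (c + d * r + e * (r:ℝ)^2) =
      n * c + d * (n*(n-1)/2) + e * (n*(n-1)*(2*n-1)/6) := by
  induction n with
  | zero => simp
  | succ k ih => rw [Finset.sum_range_succ, ih]; push_cast; ring

lemma raabe_periodic (g : ℝ → ℝ) (hg : ∀ x : ℝ, g (x + 1) = g x) (a : ℕ) (ha : 0 < a)
    (t : ℝ) :
    ∑ r ∈ Finset.range a, g ((t + r) / a) = ∑ r ∈ Finset.range a, g ((Int.fract t + r) / a) := by
  have ha' : (a : ℝ) ≠ 0 := Nat.cast_ne_zero.mpr ha.ne'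
  have hper : ∀ u : ℝ, (fun u : ℝ => ∑ r ∈ Finset.range a, g ((u + r) / a)) (u + 1) =
      (fun u : ℝ => ∑ r ∈ Finset.range a, g ((u + r) / a)) u := by
    intro u
    simp only []
    have h0 : (fun r : ℕ => g ((u + r) / a)) a = (fun r : ℕ => g ((u + r) / a)) 0 := by
      simp only []
      have : (u + (a : ℝ)) / a = (u + ((0:ℕ):ℝ)) / a + 1 := by
        push_cast; field_simp; ring
      rw [this, hg]
    calc (∑ r ∈ Finset.range a, g ((u + 1 + r) / a))
        = ∑ r ∈ Finset.range a, (fun r : ℕ => g ((u + r) / a)) (r + 1) := by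
          refine Finset.sum_congr rfl fun r _ => ?_
          simp only []
          congr 1
          push_cast; ring
      _ = ∑ r ∈ Finset.range a, g ((u + r) / a) :=
          shift_sum (f := fun r : ℕ => g ((u + r) / a)) a h0
  have key := periodic_int (H := fun u : ℝ => ∑ r ∈ Finset.range a, g ((u + r) / a))
    hper (Int.fract t) ⌊t⌋
  have ht : Int.fract t + (⌊t⌋ : ℝ) = t := by rw [Int.fract]; ring
  rw [ht] at key
  exact key

lemma raabe_sawtooth (a : ℕ) (ha : 0 < a) (t : ℝ) :
    ∑ r ∈ Finset.range a, sawtooth ((t + r) / a) = sawtooth t := by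
  have hg : ∀ x : ℝ, sawtooth (x + 1) = sawtooth x := fun x => by
    simpa using sawtooth_add_int x 1
  rw [raabe_periodic sawtooth hg a ha t]
  rw [show sawtooth t = sawtooth (Int.fract t) by
    conv_lhs => rw [show t = Int.fract t + (⌊t⌋:ℝ) by rw [Int.fract]; ring]
    exact sawtooth_add_int _ _]
  set s := Int.fract t with hs
  have hs0 : 0 ≤ s := Int.fract_nonneg t
  have hs1 : s < 1 := Int.fract_lt_one t
  clear_value s
  obtain ⟨b, rfl⟩ : ∃ b, a = b + 1 := ⟨a - 1, (Nat.succ_pred_eq_of_pos ha).symm⟩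
  have hb : (0:ℝ) < (b:ℝ) + 1 := by positivity
  rw [Finset.sum_range_succ']
  have hterm : ∀ r ∈ Finset.range b,
      sawtooth ((s + ((r + 1 : ℕ):ℝ)) / ((b+1:ℕ):ℝ)) =
      ((s+1)/((b:ℝ)+1) - 1/2) + (1/((b:ℝ)+1)) * r := by
    intro r hr
    have hrb : (r:ℝ) + 1 ≤ (b:ℝ) := by exact_mod_cast Finset.mem_range.mp hr
    have h1 : (0:ℝ) < (s + ((r+1:ℕ):ℝ)) / ((b+1:ℕ):ℝ) := by
      apply div_pos <;> [skip; skip] <;> (push_cast; linarith)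
    have h2 : (s + ((r+1:ℕ):ℝ)) / ((b+1:ℕ):ℝ) < 1 := by
      rw [div_lt_one (by push_cast; linarith)]
      push_cast; linarith
    rw [sawtooth, Int.fract_eq_self.mpr ⟨h1.le, h2⟩, if_neg h1.ne']
    push_cast
    field_simp
    ring
  rw [Finset.sum_congr rfl hterm]
  have hq := sum_quad ((s+1)/((b:ℝ)+1) - 1/2) (1/((b:ℝ)+1)) 0 b
  simp only [zero_mul, add_zero] at hq
  rw [hq]
  by_cases hz : s = 0
  · subst hz
    have : ((0:ℝ) + ((0:ℕ):ℝ)) / ((b+1:ℕ):ℝ) = 0 := by push_cast; simp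
    rw [this]
    simp only [sawtooth, Int.fract_zero, if_pos rfl]
    have hb' : (b:ℝ) + 1 ≠ 0 := ne_of_gt hb
    field_simp
    ring
  · have hsp : 0 < s := lt_of_le_of_ne hs0 (Ne.symm hz)
    have h1 : (0:ℝ) < (s + ((0:ℕ):ℝ)) / ((b+1:ℕ):ℝ) := by
      apply div_pos <;> (push_cast; linarith)
    have h2 : (s + ((0:ℕ):ℝ)) / ((b+1:ℕ):ℝ) < 1 := by
      rw [div_lt_one (by push_cast; linarith)]
      push_cast; linarith
    rw [sawtooth, Int.fract_eq_self.mpr ⟨h1.le, h2⟩, if_neg h1.ne',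
      sawtooth, Int.fract_eq_self.mpr ⟨hs0, hs1⟩, if_neg hz]
    push_cast
    field_simp
    ring

lemma raabe_psi2 (a : ℕ) (ha : 0 < a) (t : ℝ) :
    ∑ r ∈ Finset.range a, psi2 ((t + r) / a) = psi2 t / a := by
  have hg : ∀ x : ℝ, psi2 (x + 1) = psi2 x := fun x => by
    simpa using psi2_add_int x 1
  rw [raabe_periodic psi2 hg a ha t]
  rw [show psi2 t = psi2 (Int.fract t) by
    conv_lhs => rw [show t = Int.fract t + (⌊t⌋:ℝ) by rw [Int.fract]; ring]
    exact psi2_add_int _ _]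
  set s := Int.fract t with hs
  have hs0 : 0 ≤ s := Int.fract_nonneg t
  have hs1 : s < 1 := Int.fract_lt_one t
  clear_value s
  have hap : (0:ℝ) < (a:ℝ) := by exact_mod_cast ha
  have hterm : ∀ r ∈ Finset.range a,
      psi2 ((s + (r:ℝ)) / (a:ℝ)) =
      ((s^2)/(a:ℝ)^2 - s/(a:ℝ) + 1/6) + ((2*s)/(a:ℝ)^2 - 1/(a:ℝ)) * r + (1/(a:ℝ)^2) * (r:ℝ)^2 := by
    intro r hr
    have hrb : (r:ℝ) + 1 ≤ (a:ℝ) := by exact_mod_cast Finset.mem_range.mp hr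
    have h1 : (0:ℝ) ≤ (s + (r:ℝ)) / (a:ℝ) := by positivity
    have h2 : (s + (r:ℝ)) / (a:ℝ) < 1 := by
      rw [div_lt_one hap]; linarith
    rw [psi2, Int.fract_eq_self.mpr ⟨h1, h2⟩]
    field_simp
    ring
  rw [Finset.sum_congr rfl hterm, sum_quad]
  rw [psi2, Int.fract_eq_self.mpr ⟨hs0, hs1⟩]
  field_simp
  ring

lemma key_identity (u v : ℝ) (h : Int.fract u ≠ 0 ∨ Int.fract v ≠ 0) :
    sawtooth (u + v) * (sawtooth u + sawtooth v) =
      sawtooth u * sawtooth v + psi2 u / 2 + psi2 v / 2 + psi2 (u + v) / 2 := by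
  have huv : Int.fract (u + v) = Int.fract (Int.fract u + Int.fract v) := by
    conv_lhs => rw [show u + v = Int.fract u + Int.fract v + ((⌊u⌋ + ⌊v⌋ : ℤ) : ℝ) by
      push_cast; simp only [Int.fract]; ring]
    rw [Int.fract_add_intCast]
  set a := Int.fract u with ha
  set b := Int.fract v with hb
  have ha0 : 0 ≤ a := Int.fract_nonneg u
  have ha1 : a < 1 := Int.fract_lt_one u
  have hb0 : 0 ≤ b := Int.fract_nonneg v
  have hb1 : b < 1 := Int.fract_lt_one v
  have hfab : Int.fract (a + b) = if a + b < 1 then a + b else a + b - 1 := by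
    split_ifs with hlt
    · exact Int.fract_eq_self.mpr ⟨by linarith, hlt⟩
    · push_neg at hlt
      have h2 : Int.fract (a + b) = Int.fract (a + b - 1) := by
        conv_lhs => rw [show a + b = (a + b - 1) + ((1:ℤ):ℝ) by push_cast; ring]
        rw [Int.fract_add_intCast]
      rw [h2]
      exact Int.fract_eq_self.mpr ⟨by linarith, by linarith⟩
  rw [hfab] at huv
  simp only [sawtooth, psi2, huv, ← ha, ← hb]
  rcases eq_or_ne a 0 with haz | haz
  · rcases h with h' | hbz
    · exact absurd haz h'
    · rw [if_pos haz, haz]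
      have h1 : (0:ℝ) + b < 1 := by linarith
      rw [if_pos h1, if_neg (by simpa using hbz), if_neg (by simpa using hbz)]
      ring
  · rcases eq_or_ne b 0 with hbz | hbz
    · rw [if_pos hbz, hbz, if_neg haz]
      have h1 : a + 0 < 1 := by linarith
      rw [if_pos h1, if_neg (by simpa using haz)]
      ring
    · rw [if_neg haz, if_neg hbz]
      split_ifs with h1 h2 h3
      · exfalso
        have : 0 < a := lt_of_le_of_ne ha0 (Ne.symm haz)
        have : 0 < b := lt_of_le_of_ne hb0 (Ne.symm hbz)
        linarith [h2]
      · ring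
      · have hb' : b = 1 - a := by linarith [h3]
        rw [hb']; ring
      · ring

lemma g_period {g : ℕ → ℝ} {N : ℕ} (hg : ∀ m, g (m + N) = g m) (hN : 0 < N) (m : ℕ) :
    g m = g (m % N) := by
  induction m using Nat.strong_induction_on with
  | _ m ih =>
    rcases lt_or_ge m N with h | h
    · rw [Nat.mod_eq_of_lt h]
    · have h1 : m - N + N = m := Nat.sub_add_cancel h
      have h2 : g (m - N) = g m := by rw [← hg (m - N), h1]
      rw [← h2, ih (m - N) (by omega), Nat.mod_eq_sub_mod h]

lemma crt_sum (α β : ℕ) (hα : 0 < α) (hβ : 0 < β) (hcop : Nat.Coprime α β)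
    (g : ℕ → ℝ) (hg : ∀ m, g (m + α * β) = g m) :
    ∑ r ∈ Finset.range α, ∑ s ∈ Finset.range β, g (β * r + α * s) =
      ∑ k ∈ Finset.range (α * β), g k := by
  have hN : 0 < α * β := Nat.mul_pos hα hβ
  rw [← Finset.sum_product']
  have hmem : ∀ p ∈ Finset.range α ×ˢ Finset.range β,
      (β * p.1 + α * p.2) % (α * β) ∈ Finset.range (α * β) :=
    fun p _ => Finset.mem_range.mpr (Nat.mod_lt _ hN)
  have hinj : ∀ p₁ ∈ Finset.range α ×ˢ Finset.range β,
      ∀ p₂ ∈ Finset.range α ×ˢ Finset.range β,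
      (β * p₁.1 + α * p₁.2) % (α * β) = (β * p₂.1 + α * p₂.2) % (α * β) → p₁ = p₂ := by
    rintro ⟨r, s⟩ hp ⟨r', s'⟩ hp' h
    simp only [Finset.mem_product, Finset.mem_range] at hp hp'
    have hmod : β * r + α * s ≡ β * r' + α * s' [MOD α * β] := h
    have hmodα : β * r + α * s ≡ β * r' + α * s' [MOD α] :=
      hmod.of_dvd ⟨β, rfl⟩
    have hzs : α * s ≡ α * s' [MOD α] :=
      ((Nat.modEq_zero_iff_dvd).mpr ⟨s, rfl⟩).trans
        ((Nat.modEq_zero_iff_dvd).mpr ⟨s', rfl⟩).symm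
    have hβr : β * r ≡ β * r' [MOD α] := (Nat.ModEq.add_right_cancel hzs) hmodα
    have hrr : r ≡ r' [MOD α] := Nat.ModEq.cancel_left_of_coprime hcop hβr
    have hr : r = r' := by
      have := hrr
      unfold Nat.ModEq at this
      rwa [Nat.mod_eq_of_lt hp.1, Nat.mod_eq_of_lt hp'.1] at this
    subst hr
    have hmods : α * s ≡ α * s' [MOD α * β] := (Nat.ModEq.add_left_cancel' _) hmod
    have : α * (s % β) = α * (s' % β) := by
      have := hmods
      unfold Nat.ModEq at this
      rwa [Nat.mul_mod_mul_left, Nat.mul_mod_mul_left] at this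
    have hs : s = s' := by
      have h2 := Nat.eq_of_mul_eq_mul_left hα this
      rwa [Nat.mod_eq_of_lt hp.2, Nat.mod_eq_of_lt hp'.2] at h2
    simp [hs]
  refine Finset.sum_bij (fun p _ => (β * p.1 + α * p.2) % (α * β)) hmem hinj ?_ ?_
  · intro k hk
    have hcard : (Finset.range (α * β)).card ≤ ((Finset.range α) ×ˢ (Finset.range β)).card := by
      simp [Finset.card_product]
    obtain ⟨p, hp, hpk⟩ := Finset.surj_on_of_inj_on_of_card_le
      (fun p _ => (β * p.1 + α * p.2) % (α * β)) hmem
      (fun a₁ a₂ h₁ h₂ => hinj a₁ h₁ a₂ h₂) hcard k hk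
    exact ⟨p, hp, hpk.symm⟩
  · intro p hp
    exact g_period hg hN _

lemma drSum_range (b a : ℕ) (ha : 0 < a) (x y : ℝ) :
    drSum (b : ℤ) a x y = ∑ r ∈ Finset.range a,
      sawtooth (x + (b:ℝ) * (((r:ℝ) + y) / a)) * sawtooth (((r:ℝ) + y) / a) := by
  have ha' : (a:ℝ) ≠ 0 := Nat.cast_ne_zero.mpr ha.ne'
  rw [drSum, ← Finset.Ico_add_one_right_eq_Icc, Finset.sum_Ico_eq_sum_range]
  simp only [Nat.add_sub_cancel, Int.cast_natCast]
  have hf0 : (fun r : ℕ => sawtooth (x + (b:ℝ) * (((r:ℝ) + y) / a)) * sawtooth (((r:ℝ) + y) / a)) a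
      = (fun r : ℕ => sawtooth (x + (b:ℝ) * (((r:ℝ) + y) / a)) * sawtooth (((r:ℝ) + y) / a)) 0 := by
    simp only []
    have e1 : ((a:ℝ) + y)/a = (((0:ℕ):ℝ) + y)/a + ((1:ℤ):ℝ) := by push_cast; field_simp; ring
    have e2 : x + (b:ℝ) * (((a:ℝ) + y)/a) = (x + (b:ℝ) * ((((0:ℕ):ℝ) + y)/a)) + ((b:ℤ):ℝ) := by
      rw [e1]; push_cast; ring
    rw [e2, sawtooth_add_int, e1, sawtooth_add_int]
  refine Eq.trans (Finset.sum_congr rfl fun i _ => ?_)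
    (shift_sum (f := fun r : ℕ =>
      sawtooth (x + (b:ℝ) * (((r:ℝ) + y) / a)) * sawtooth (((r:ℝ) + y) / a)) a hf0)
  rw [Nat.add_comm 1 i]

/-- Dedekind–Rademacher reciprocity, non-integer case: for coprime positive integers `α`, `β`
and reals `x`, `y` not both integers,
`s(β, α; x, y) + s(α, β; y, x) = ((x))((y)) + (β²ψ₂(y) + ψ₂(βy + αx) + α²ψ₂(x))/(2αβ)`. -/
theorem drSum_reciprocity_noninteger
    (α β : ℕ) (hα : 0 < α) (hβ : 0 < β) (hcop : Nat.Coprime α β) (x y : ℝ)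
    (hxy : (¬∃ n : ℤ, (n : ℝ) = x) ∨ (¬∃ n : ℤ, (n : ℝ) = y)) :
    drSum (β : ℤ) α x y + drSum (α : ℤ) β y x =
      sawtooth x * sawtooth y +
        ((β : ℝ) ^ 2 * psi2 y + psi2 ((β : ℝ) * y + (α : ℝ) * x) + (α : ℝ) ^ 2 * psi2 x) /
          (2 * (α : ℝ) * (β : ℝ)) := by
  have hα' : (α:ℝ) ≠ 0 := Nat.cast_ne_zero.mpr hα.ne'
  have hβ' : (β:ℝ) ≠ 0 := Nat.cast_ne_zero.mpr hβ.ne'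
  -- non-integrality condition
  have gen : ∀ (q:ℕ), 0 < q → ∀ (w : ℝ), (¬∃ n:ℤ, (n:ℝ) = w) →
      ∀ m:ℕ, Int.fract (((m:ℝ)+w)/q) ≠ 0 := by
    intro q hq w hw m hc
    apply hw
    have hq' : (q:ℝ) ≠ 0 := Nat.cast_ne_zero.mpr hq.ne'
    have hfl : ((m:ℝ)+w)/q = (⌊((m:ℝ)+w)/q⌋:ℝ) := by
      rw [Int.fract] at hc; linarith
    rw [div_eq_iff hq'] at hfl
    refine ⟨(q:ℤ) * ⌊((m:ℝ)+w)/q⌋ - m, ?_⟩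
    push_cast
    linarith
  have hcond : ∀ r s : ℕ,
      Int.fract (((r:ℝ)+y)/α) ≠ 0 ∨ Int.fract (((s:ℝ)+x)/β) ≠ 0 := by
    rcases hxy with hx | hy
    · intro r s; exact Or.inr (gen β hβ x hx s)
    · intro r s; exact Or.inl (gen α hα y hy r)
  -- Raabe sums
  have hU : ∑ r ∈ Finset.range α, sawtooth (((r:ℝ)+y)/α) = sawtooth y := by
    rw [show (∑ r ∈ Finset.range α, sawtooth (((r:ℝ)+y)/α))
        = ∑ r ∈ Finset.range α, sawtooth ((y+(r:ℝ))/α) from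
      Finset.sum_congr rfl fun r _ => by rw [add_comm]]
    exact raabe_sawtooth α hα y
  have hV : ∑ s ∈ Finset.range β, sawtooth (((s:ℝ)+x)/β) = sawtooth x := by
    rw [show (∑ s ∈ Finset.range β, sawtooth (((s:ℝ)+x)/β))
        = ∑ s ∈ Finset.range β, sawtooth ((x+(s:ℝ))/β) from
      Finset.sum_congr rfl fun s _ => by rw [add_comm]]
    exact raabe_sawtooth β hβ x
  have hU2 : ∑ r ∈ Finset.range α, psi2 (((r:ℝ)+y)/α) = psi2 y / α := by
    rw [show (∑ r ∈ Finset.range α, psi2 (((r:ℝ)+y)/α))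
        = ∑ r ∈ Finset.range α, psi2 ((y+(r:ℝ))/α) from
      Finset.sum_congr rfl fun r _ => by rw [add_comm]]
    exact raabe_psi2 α hα y
  have hV2 : ∑ s ∈ Finset.range β, psi2 (((s:ℝ)+x)/β) = psi2 x / β := by
    rw [show (∑ s ∈ Finset.range β, psi2 (((s:ℝ)+x)/β))
        = ∑ s ∈ Finset.range β, psi2 ((x+(s:ℝ))/β) from
      Finset.sum_congr rfl fun s _ => by rw [add_comm]]
    exact raabe_psi2 β hβ x
  -- expansion of the two Dedekind-Rademacher sums into double sums
  have e1 : drSum (β:ℤ) α x y = ∑ r ∈ Finset.range α, ∑ s ∈ Finset.range β,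
      sawtooth ((((r:ℝ)+y)/α) + (((s:ℝ)+x)/β)) * sawtooth (((r:ℝ)+y)/α) := by
    rw [drSum_range β α hα x y]
    refine Finset.sum_congr rfl fun r _ => ?_
    rw [show sawtooth (x + (β:ℝ) * (((r:ℝ)+y)/α)) = ∑ s ∈ Finset.range β,
        sawtooth ((((r:ℝ)+y)/α) + (((s:ℝ)+x)/β)) from ?_, Finset.sum_mul]
    rw [← raabe_sawtooth β hβ (x + (β:ℝ) * (((r:ℝ)+y)/α))]
    refine Finset.sum_congr rfl fun s _ => ?_
    congr 1
    field_simp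
    ring
  have e2 : drSum (α:ℤ) β y x = ∑ s ∈ Finset.range β, ∑ r ∈ Finset.range α,
      sawtooth ((((r:ℝ)+y)/α) + (((s:ℝ)+x)/β)) * sawtooth (((s:ℝ)+x)/β) := by
    rw [drSum_range α β hβ y x]
    refine Finset.sum_congr rfl fun s _ => ?_
    rw [show sawtooth (y + (α:ℝ) * (((s:ℝ)+x)/β)) = ∑ r ∈ Finset.range α,
        sawtooth ((((r:ℝ)+y)/α) + (((s:ℝ)+x)/β)) from ?_, Finset.sum_mul]
    rw [← raabe_sawtooth α hα (y + (α:ℝ) * (((s:ℝ)+x)/β))]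
    refine Finset.sum_congr rfl fun r _ => ?_
    congr 1
    field_simp
    ring
  rw [e1, e2]
  rw [show (∑ s ∈ Finset.range β, ∑ r ∈ Finset.range α,
      sawtooth ((((r:ℝ)+y)/α) + (((s:ℝ)+x)/β)) * sawtooth (((s:ℝ)+x)/β))
      = ∑ r ∈ Finset.range α, ∑ s ∈ Finset.range β,
      sawtooth ((((r:ℝ)+y)/α) + (((s:ℝ)+x)/β)) * sawtooth (((s:ℝ)+x)/β) from
    Finset.sum_comm]
  simp only [← Finset.sum_add_distrib]
  have e4 : ∀ r s : ℕ,
      sawtooth ((((r:ℝ)+y)/α) + (((s:ℝ)+x)/β)) * sawtooth (((r:ℝ)+y)/α) +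
      sawtooth ((((r:ℝ)+y)/α) + (((s:ℝ)+x)/β)) * sawtooth (((s:ℝ)+x)/β) =
      sawtooth (((r:ℝ)+y)/α) * sawtooth (((s:ℝ)+x)/β) +
        psi2 (((r:ℝ)+y)/α) / 2 + psi2 (((s:ℝ)+x)/β) / 2 +
        psi2 ((((r:ℝ)+y)/α) + (((s:ℝ)+x)/β)) / 2 := by
    intro r s
    rw [← mul_add]
    exact key_identity _ _ (hcond r s)
  rw [Finset.sum_congr rfl fun r _ => Finset.sum_congr rfl fun s _ => e4 r s]
  simp only [Finset.sum_add_distrib]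
  have hA : ∑ r ∈ Finset.range α, ∑ s ∈ Finset.range β,
      sawtooth (((r:ℝ)+y)/α) * sawtooth (((s:ℝ)+x)/β) = sawtooth y * sawtooth x := by
    rw [Finset.sum_congr rfl fun r (_ : r ∈ Finset.range α) =>
      (Finset.mul_sum _ _ _).symm]
    rw [Finset.sum_congr rfl fun r (_ : r ∈ Finset.range α) => by rw [hV]]
    rw [← Finset.sum_mul, hU]
  have hB : ∑ r ∈ Finset.range α, ∑ s ∈ Finset.range β,
      psi2 (((r:ℝ)+y)/α) / 2 = (β:ℝ) * ((psi2 y / α) / 2) := by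
    rw [Finset.sum_congr rfl fun r (_ : r ∈ Finset.range α) => by
      rw [Finset.sum_const, Finset.card_range, nsmul_eq_mul]]
    rw [← Finset.mul_sum, ← Finset.sum_div, hU2]
  have hC : ∑ r ∈ Finset.range α, ∑ s ∈ Finset.range β,
      psi2 (((s:ℝ)+x)/β) / 2 = (α:ℝ) * ((psi2 x / β) / 2) := by
    rw [Finset.sum_congr rfl fun r (_ : r ∈ Finset.range α) => by
      rw [← Finset.sum_div, hV2]]
    rw [Finset.sum_const, Finset.card_range, nsmul_eq_mul]
  have hD : ∑ r ∈ Finset.range α, ∑ s ∈ Finset.range β,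
      psi2 ((((r:ℝ)+y)/α) + (((s:ℝ)+x)/β)) / 2 =
      (psi2 ((β:ℝ)*y + (α:ℝ)*x) / ((α:ℝ)*(β:ℝ))) / 2 := by
    set z : ℝ := (β:ℝ)*y + (α:ℝ)*x with hz
    set g : ℕ → ℝ := fun m => psi2 ((z + (m:ℝ)) / ((α:ℝ)*(β:ℝ))) with hgdef
    have hg : ∀ m, g (m + α*β) = g m := by
      intro m
      simp only [hgdef]
      rw [show (z + ((m + α*β : ℕ):ℝ)) / ((α:ℝ)*(β:ℝ))
          = (z + (m:ℝ)) / ((α:ℝ)*(β:ℝ)) + ((1:ℤ):ℝ) by push_cast; field_simp; ring]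
      exact psi2_add_int _ _
    have hterm : ∀ r s : ℕ, psi2 ((((r:ℝ)+y)/α) + (((s:ℝ)+x)/β)) = g (β*r + α*s) := by
      intro r s
      simp only [hgdef]
      congr 1
      push_cast
      field_simp
      ring
    rw [Finset.sum_congr rfl fun r (_ : r ∈ Finset.range α) =>
      Finset.sum_congr rfl fun s (_ : s ∈ Finset.range β) => by
        rw [hterm r s]]
    rw [Finset.sum_congr rfl fun r (_ : r ∈ Finset.range α) =>
      (Finset.sum_div _ _ _).symm]
    rw [← Finset.sum_div, crt_sum α β hα hβ hcop g hg]
    congr 1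
    rw [show psi2 z / ((α:ℝ)*(β:ℝ)) = psi2 z / (((α*β:ℕ)):ℝ) by push_cast; ring]
    rw [← raabe_psi2 (α*β) (Nat.mul_pos hα hβ) z]
    refine Finset.sum_congr rfl fun k _ => ?_
    simp only [hgdef]
    congr 1
    push_cast
    ring
  rw [hA, hB, hC, hD]
  field_simp
  ring
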